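/- arXiv:1310.0661 — 2 statements merged into one kernel-verified Lean document; each statement's English description precedes it below -/
import Mathlib

section
/- Under the regularity setting, there exists a sequence (ξ̂ₙ) of Ξ-valued estimators (each ξ̂ₙ a measurable function of (y₁,…,yₙ)) such that, almost surely, for all sufficiently large n, ξ̂ₙ is a global maximum over Ξ of the average log-likelihood ℓ̄ₙ(ξ) = (1/n)Σ_{i=1}^n log f(yᵢ|ξ). -/
open MeasureTheory ProbabilityTheory Filter

noncomputable section

/-- The regularity setting (R3)–(R8) for a statistical model `{f(·|ξ) : ξ ∈ Ξ}`
on countable data, with respect to the data-generating pmf `q`. -/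
structure RegularModel (Y : Type) (q : Y → ℝ) (d : ℕ) where
  Xi : Set (EuclideanSpace ℝ (Fin d))
  Xi_open : IsOpen Xi
  Xi_nonempty : Xi.Nonempty
  f : Y → EuclideanSpace ℝ (Fin d) → ℝ
  f_pos : ∀ y, ∀ ξ ∈ Xi, 0 < f y ξ
  f_pmf : ∀ ξ ∈ Xi, ∑' y, f y ξ = 1
  xistar : EuclideanSpace ℝ (Fin d)
  xistar_mem : xistar ∈ Xi
  /-- (R3): the Kullback–Leibler divergence is finite (summable) at `xistar`. -/
  R3_summable : Summable (fun y => q y * Real.log (q y / f y xistar))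
  /-- (R3): `xistar` is the unique minimizer of the Kullback–Leibler divergence over `Xi`. -/
  R3_unique_min : ∀ ξ ∈ Xi, ξ ≠ xistar →
    ¬ Summable (fun y => q y * Real.log (q y / f y ξ)) ∨
      (∑' y, q y * Real.log (q y / f y xistar)) < ∑' y, q y * Real.log (q y / f y ξ)
  /-- (R4): finite second moment of the log-likelihood ratio at `xistar`. -/
  R4 : Summable (fun y => q y * (Real.log (q y / f y xistar)) ^ 2)
  /-- gradient of the unit log-likelihood -/
  s : Y → EuclideanSpace ℝ (Fin d) → EuclideanSpace ℝ (Fin d)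
  /-- Hessian of the unit log-likelihood -/
  H : Y → EuclideanSpace ℝ (Fin d) → EuclideanSpace ℝ (Fin d) →L[ℝ] EuclideanSpace ℝ (Fin d)
  /-- (R5): the unit log-likelihood has gradient `s` on `Xi`. -/
  R5_grad : ∀ y, ∀ ξ ∈ Xi, HasGradientAt (fun ξ' => Real.log (f y ξ')) (s y ξ) ξ
  /-- (R5): the gradient has derivative (Hessian) `H` on `Xi`. -/
  R5_hess : ∀ y, ∀ ξ ∈ Xi, HasFDerivAt (s y) (H y ξ) ξ
  /-- (R5): the Hessian is continuous on `Xi`. -/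
  R5_cont : ∀ y, ContinuousOn (H y) Xi
  /-- (R6) -/
  R6_log : Summable (fun y => q y * |Real.log (f y xistar)|)
  /-- (R6) -/
  R6_score : Summable (fun y => q y * ‖s y xistar‖ ^ 2)
  /-- radius of the ball `B` of (R7) -/
  r : ℝ
  r_pos : 0 < r
  ball_subset : Metric.ball xistar r ⊆ Xi
  c : Y → ℝ
  c_nonneg : ∀ y, 0 ≤ c y
  c_summable : Summable (fun y => q y * c y)
  /-- (R7): domination of the Hessian on the ball `B`. -/
  R7_bound : ∀ y, ∀ ξ ∈ Metric.ball xistar r, ‖H y ξ‖ ≤ c y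
  /-- (R8): connected upper level sets of all average log-likelihoods. -/
  R8 : ∀ (n : ℕ) (ys : Fin n → Y) (lam : ℝ),
    IsPreconnected {ξ | ξ ∈ Xi ∧ lam < (1 / (n : ℝ)) * ∑ i, Real.log (f (ys i) ξ)}

/-- The ball `B` of assumption (R7). -/
def RegularModel.B {Y : Type} {q : Y → ℝ} {d : ℕ} (M : RegularModel Y q d) :
    Set (EuclideanSpace ℝ (Fin d)) :=
  Metric.ball M.xistar M.r

/-- `yseq` are i.i.d. random variables on `(Ω, P)` with common pmf `q`. -/
def IIDData {Ω Y : Type} [MeasurableSpace Ω] [MeasurableSpace Y]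
    (P : Measure Ω) (yseq : ℕ → Ω → Y) (q : Y → ℝ) : Prop :=
  (∀ i, Measurable (yseq i)) ∧
    iIndepFun yseq P ∧
      ∀ i y, (P {ω | yseq i ω = y}).toReal = q y

/-- The average log-likelihood based on the data `ys`. -/
def avgLogLik {Y : Type} {d : ℕ} (f : Y → EuclideanSpace ℝ (Fin d) → ℝ)
    (n : ℕ) (ys : Fin n → Y) (ξ : EuclideanSpace ℝ (Fin d)) : ℝ :=
  (1 / (n : ℝ)) * ∑ i, Real.log (f (ys i) ξ)

/-- `est` is a sequence of maximum-likelihood estimators: `est n` is a measurable,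
`Ξ`-valued function of the first `n` observations which, almost surely, for all
sufficiently large `n`, globally maximizes the average log-likelihood over `Ξ`. -/
def IsMLESeq {Ω Y : Type} [MeasurableSpace Ω] [MeasurableSpace Y] {q : Y → ℝ} {d : ℕ}
    (M : RegularModel Y q d) (P : Measure Ω) (yseq : ℕ → Ω → Y)
    (est : (n : ℕ) → (Fin n → Y) → EuclideanSpace ℝ (Fin d)) : Prop :=
  (∀ n, Measurable (est n)) ∧ (∀ n ys, est n ys ∈ M.Xi) ∧
    ∀ᵐ ω ∂P, ∃ N : ℕ, ∀ n ≥ N, ∀ ξ ∈ M.Xi,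
      avgLogLik M.f n (fun i => yseq i ω) ξ ≤
        avgLogLik M.f n (fun i => yseq i ω) (est n (fun i => yseq i ω))

/-- A sequence of real random variables is bounded in probability. -/
def BoundedInProb {Ω : Type} [MeasurableSpace Ω] (P : Measure Ω) (R : ℕ → Ω → ℝ) : Prop :=
  ∀ ε > (0 : ℝ), ∃ M > (0 : ℝ), ∃ N : ℕ, ∀ n ≥ N, (P {ω | M < |R n ω|}).toReal < ε

end

/-!
The estimator maximizes `ℓ̄ₙ` over a closed ball `K` of radius `r/2` around `ξ*`; it exists by
compactness and is measurable because the data space is countable. By (R3) the limit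
`L(ξ) = Σ q(y) log f(y|ξ)` of `ℓ̄ₙ` is strictly below `L(ξ*)` on the sphere `∂K`, hence below
some `c < L(ξ*)`. Since the `ℓ̄ₙ` are Lipschitz on `B` with constants whose averages converge
by the strong law (R6, R7), pointwise a.s. convergence on a finite net of `∂K` gives, almost
surely for large `n`, `ℓ̄ₙ < c` on `∂K` while `ℓ̄ₙ(ξ*) > c`. The connected superlevel set
`{ℓ̄ₙ > c}` (R8) meets the open ball and cannot cross `∂K`, so it lies inside `K`, and the
maximizer over `K` is a global maximizer.
-/

open Metric Topology

section Topology

theorem IsCompact.exists_lt_forall_lt {E : Type*} [TopologicalSpace E] {S : Set E}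
    (hS : IsCompact S) {F : E → ℝ} (hF : ContinuousOn F S) {a : ℝ} (h : ∀ x ∈ S, F x < a) :
    ∃ b < a, ∀ x ∈ S, F x < b := by
  rcases S.eq_empty_or_nonempty with rfl | hne
  · exact ⟨a - 1, by linarith, by simp⟩
  obtain ⟨x₀, hx₀, hmax⟩ := hS.exists_isMaxOn hne hF
  have := h x₀ hx₀
  exact ⟨(F x₀ + a) / 2, by linarith, fun x hx => by linarith [isMaxOn_iff.1 hmax x hx]⟩

variable {E : Type*} [PseudoMetricSpace E]

theorem eventually_forall_lt_of_finite_net {ι : Type*} {l : Filter ι} {S t : Set E}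
    {ε C b : ℝ} (ht : t.Finite) (hcov : S ⊆ ⋃ x ∈ t, ball x ε) (hC : 0 ≤ C)
    {ℓ : ι → E → ℝ} {D : ι → ℝ} {L : E → ℝ}
    (hlip : ∀ n, ∀ z ∈ S, ∀ x ∈ t, |ℓ n z - ℓ n x| ≤ D n * dist z x)
    (hD : ∀ᶠ n in l, D n ≤ C) (hconv : ∀ x ∈ t, Tendsto (ℓ · x) l (𝓝 (L x)))
    (hL : ∀ x ∈ t, L x + C * ε < b) :
    ∀ᶠ n in l, ∀ z ∈ S, ℓ n z < b := by
  have hnet : ∀ᶠ n in l, ∀ x ∈ t, ℓ n x < b - C * ε :=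
    ht.eventually_all.2 fun x hx =>
      (hconv x hx).eventually (gt_mem_nhds (by linarith [hL x hx]))
  filter_upwards [hnet, hD] with n hn hDn z hz
  obtain ⟨x, hx, hzx⟩ := Set.mem_iUnion₂.1 (hcov hz)
  calc ℓ n z ≤ ℓ n x + D n * dist z x := by linarith [(abs_le.1 (hlip n z hz x hx)).2]
    _ ≤ ℓ n x + C * ε := by linarith [mul_le_mul hDn (mem_ball.1 hzx).le dist_nonneg hC]
    _ < b := by linarith [hn x hx]

/-- The superlevel set `{ℓ > c}` meets the open ball but not the sphere, so by preconnectedness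
it cannot leave the closed ball. -/
theorem IsMaxOn.of_isPreconnected_superlevel {ℓ : E → ℝ} {Ξ : Set E} {x₀ x : E} {ρ c : ℝ}
    (hmax : IsMaxOn ℓ (closedBall x₀ ρ) x) (hxΞ : x ∈ Ξ) (hxK : x ∈ closedBall x₀ ρ)
    (hc : c < ℓ x) (hsphere : ∀ z ∈ sphere x₀ ρ, ℓ z ≤ c)
    (hconn : IsPreconnected {ξ | ξ ∈ Ξ ∧ c < ℓ ξ}) :
    IsMaxOn ℓ Ξ x := by
  have hball : ∀ z ∈ closedBall x₀ ρ, c < ℓ z → z ∈ ball x₀ ρ := fun z hz hcz =>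
    (mem_closedBall.1 hz).lt_of_ne fun h => (hsphere z h).not_gt hcz
  intro ξ hξ
  by_contra hlt
  replace hlt : ℓ x < ℓ ξ := lt_of_not_ge hlt
  have hξK : ξ ∉ closedBall x₀ ρ := fun h => hlt.not_ge (hmax h)
  have hsub : {ξ | ξ ∈ Ξ ∧ c < ℓ ξ} ⊆ ball x₀ ρ ∪ (closedBall x₀ ρ)ᶜ := by
    rintro z ⟨-, hcz⟩
    by_cases hz : z ∈ closedBall x₀ ρ
    · exact Or.inl (hball z hz hcz)
    · exact Or.inr hz
  obtain ⟨z, -, hz, hz'⟩ := hconn _ _ isOpen_ball isClosed_closedBall.isOpen_compl hsub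
    ⟨x, ⟨hxΞ, hc⟩, hball x hxK hc⟩ ⟨ξ, ⟨hξ, hc.trans hlt⟩, hξK⟩
  exact hz' (ball_subset_closedBall hz)

end Topology

namespace IIDData

variable {Ω Y : Type} [MeasurableSpace Ω] [MeasurableSpace Y]
  {P : Measure Ω} {yseq : ℕ → Ω → Y} {q : Y → ℝ}

theorem nonneg (h : IIDData P yseq q) (y : Y) : 0 ≤ q y :=
  h.2.2 0 y ▸ ENNReal.toReal_nonneg

variable [MeasurableSingletonClass Y]

theorem map_singleton [IsFiniteMeasure P] (h : IIDData P yseq q) (i : ℕ) (y : Y) :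
    P.map (yseq i) {y} = ENNReal.ofReal (q y) := by
  rw [Measure.map_apply (h.1 i) (measurableSet_singleton y), ← h.2.2 i y,
    ENNReal.ofReal_toReal (measure_ne_top P _)]
  rfl

variable [Countable Y] [IsProbabilityMeasure P]

theorem identDistrib (h : IIDData P yseq q) (i : ℕ) : IdentDistrib (yseq i) (yseq 0) P P :=
  ⟨(h.1 i).aemeasurable, (h.1 0).aemeasurable,
    Measure.ext_of_singleton fun y => by rw [h.map_singleton, h.map_singleton]⟩

theorem ae_tendsto_average (h : IIDData P yseq q) (g : Y → ℝ)
    (hg : Summable fun y => q y * |g y|) :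
    ∀ᵐ ω ∂P, Tendsto (fun n : ℕ => 1 / (n : ℝ) * ∑ i : Fin n, g (yseq i ω))
      atTop (𝓝 (∑' y, q y * g y)) := by
  have hlaw : P.map (yseq 0) = Measure.sum fun y => ENNReal.ofReal (q y) • Measure.dirac y := by
    conv_lhs => rw [← Measure.sum_smul_dirac (P.map (yseq 0))]
    simp only [h.map_singleton]
  have hsum : Summable fun y => (ENNReal.ofReal (q y)).toReal * ‖g y‖ := by
    simpa only [ENNReal.toReal_ofReal (h.nonneg _), Real.norm_eq_abs] using hg
  have hint : Integrable g (P.map (yseq 0)) := by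
    rw [hlaw]; exact (integrable_sum_dirac_iff fun _ => ENNReal.ofReal_ne_top).2 hsum
  have hmean : ∫ ω, g (yseq 0 ω) ∂P = ∑' y, q y * g y := by
    rw [← integral_map (h.1 0).aemeasurable hint.aestronglyMeasurable, hlaw,
      (hasSum_integral_sum_dirac (fun _ => ENNReal.ofReal_ne_top) hsum).tsum_eq.symm]
    simp only [ENNReal.toReal_ofReal (h.nonneg _), smul_eq_mul]
  have hslln := strong_law_ae (μ := P) (fun i => g ∘ yseq i)
    ((integrable_map_measure hint.aestronglyMeasurable (h.1 0).aemeasurable).1 hint)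
    (fun i j hij => (h.2.1.indepFun hij).comp .of_discrete .of_discrete)
    (fun i => (h.identDistrib i).comp .of_discrete)
  filter_upwards [hslln] with ω hω
  simp only [Function.comp_def, hmean] at hω
  convert hω using 2 with n
  rw [Fin.sum_univ_eq_sum_range (fun i => g (yseq i ω)) n, smul_eq_mul, one_div]

end IIDData

namespace RegularModel

open Real

variable {Y : Type} {q : Y → ℝ} {d : ℕ} (M : RegularModel Y q d)

noncomputable def expectedLogLik (ξ : EuclideanSpace ℝ (Fin d)) : ℝ :=
  ∑' y, q y * log (M.f y ξ)

/-- A Lipschitz constant of `ξ ↦ log f(y|ξ)` on `B`, by (R7) and the mean value theorem. -/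
noncomputable def lipBound (y : Y) : ℝ :=
  ‖M.s y M.xistar‖ + M.c y * M.r

theorem lipBound_nonneg (y : Y) : 0 ≤ M.lipBound y :=
  add_nonneg (norm_nonneg _) (mul_nonneg (M.c_nonneg y) M.r_pos.le)

theorem xistar_mem_B : M.xistar ∈ M.B :=
  mem_ball_self M.r_pos

theorem continuousOn_log_f (y : Y) : ContinuousOn (fun ξ => log (M.f y ξ)) M.Xi :=
  fun ξ hξ => (M.R5_grad y ξ hξ).differentiableAt.continuousAt.continuousWithinAt

theorem norm_s_le_lipBound (y : Y) {ξ : EuclideanSpace ℝ (Fin d)} (hξ : ξ ∈ M.B) :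
    ‖M.s y ξ‖ ≤ M.lipBound y := by
  have hmvt : ‖M.s y ξ - M.s y M.xistar‖ ≤ M.c y * ‖ξ - M.xistar‖ :=
    (convex_ball M.xistar M.r).norm_image_sub_le_of_norm_hasFDerivWithin_le
      (fun x hx => (M.R5_hess y x (M.ball_subset hx)).hasFDerivWithinAt)
      (fun x hx => M.R7_bound y x hx) M.xistar_mem_B hξ
  have hdist : ‖ξ - M.xistar‖ ≤ M.r := (mem_ball_iff_norm.1 hξ).le
  calc ‖M.s y ξ‖ ≤ ‖M.s y M.xistar‖ + ‖M.s y ξ - M.s y M.xistar‖ :=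
        norm_le_norm_add_norm_sub' _ _
    _ ≤ M.lipBound y := by
        unfold lipBound
        linarith [mul_le_mul_of_nonneg_left hdist (M.c_nonneg y)]

theorem abs_log_f_sub_le (y : Y) {ξ ξ' : EuclideanSpace ℝ (Fin d)} (hξ : ξ ∈ M.B)
    (hξ' : ξ' ∈ M.B) :
    |log (M.f y ξ) - log (M.f y ξ')| ≤ M.lipBound y * dist ξ ξ' := by
  have := (convex_ball M.xistar M.r).norm_image_sub_le_of_norm_hasFDerivWithin_le
    (fun x hx => (M.R5_grad y x (M.ball_subset hx)).hasFDerivAt.hasFDerivWithinAt)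
    (fun x hx => by rw [LinearIsometryEquiv.norm_map]; exact M.norm_s_le_lipBound y hx) hξ' hξ
  rwa [dist_eq_norm, ← Real.norm_eq_abs]

theorem abs_log_f_le (y : Y) {ξ : EuclideanSpace ℝ (Fin d)} (hξ : ξ ∈ M.B) :
    |log (M.f y ξ)| ≤ |log (M.f y M.xistar)| + M.lipBound y * M.r := by
  have h := M.abs_log_f_sub_le y hξ M.xistar_mem_B
  have hdist : dist ξ M.xistar ≤ M.r := (mem_ball.1 hξ).le
  linarith [abs_sub_abs_le_abs_sub (log (M.f y ξ)) (log (M.f y M.xistar)),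
    mul_le_mul_of_nonneg_left hdist (M.lipBound_nonneg y)]

theorem continuousOn_avgLogLik (n : ℕ) (ys : Fin n → Y) :
    ContinuousOn (avgLogLik M.f n ys) M.Xi :=
  continuousOn_const.mul (continuousOn_finsetSum _ fun i _ => M.continuousOn_log_f (ys i))

theorem abs_avgLogLik_sub_le (n : ℕ) (ys : Fin n → Y) {ξ ξ' : EuclideanSpace ℝ (Fin d)}
    (hξ : ξ ∈ M.B) (hξ' : ξ' ∈ M.B) :
    |avgLogLik M.f n ys ξ - avgLogLik M.f n ys ξ'| ≤
      (1 / (n : ℝ) * ∑ i, M.lipBound (ys i)) * dist ξ ξ' := by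
  unfold avgLogLik
  rw [← mul_sub, ← Finset.sum_sub_distrib, abs_mul, abs_of_nonneg (by positivity), mul_assoc,
    Finset.sum_mul]
  gcongr
  exact (Finset.abs_sum_le_sum_abs _ _).trans
    (Finset.sum_le_sum fun i _ => M.abs_log_f_sub_le (ys i) hξ hξ')

section Summability

variable (hq0 : ∀ y, 0 ≤ q y) (hq : Summable q)
include hq0 hq

theorem summable_mul_lipBound : Summable fun y => q y * M.lipBound y := by
  refine .of_nonneg_of_le (fun y => mul_nonneg (hq0 y) (M.lipBound_nonneg y)) (fun y => ?_)
    ((hq.add M.R6_score).add (M.c_summable.mul_right M.r))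
  have : ‖M.s y M.xistar‖ ≤ 1 + ‖M.s y M.xistar‖ ^ 2 := by
    nlinarith [norm_nonneg (M.s y M.xistar)]
  have := mul_le_mul_of_nonneg_left this (hq0 y)
  simp only [lipBound]
  nlinarith

theorem summable_mul_abs_log_f {ξ : EuclideanSpace ℝ (Fin d)} (hξ : ξ ∈ M.B) :
    Summable fun y => q y * |log (M.f y ξ)| := by
  refine .of_nonneg_of_le (fun y => mul_nonneg (hq0 y) (abs_nonneg _)) (fun y => ?_)
    (M.R6_log.add ((M.summable_mul_lipBound hq0 hq).mul_right M.r))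
  have := mul_le_mul_of_nonneg_left (M.abs_log_f_le y hξ) (hq0 y)
  linarith

theorem summable_mul_log_f {ξ : EuclideanSpace ℝ (Fin d)} (hξ : ξ ∈ M.B) :
    Summable fun y => q y * log (M.f y ξ) :=
  (M.summable_mul_abs_log_f hq0 hq hξ).of_norm_bounded fun y => by
    rw [norm_mul, Real.norm_of_nonneg (hq0 y), Real.norm_eq_abs]

theorem continuousOn_expectedLogLik : ContinuousOn M.expectedLogLik M.B := by
  refine continuousOn_tsum (fun y => continuousOn_const.mul ((M.continuousOn_log_f y).mono
    M.ball_subset)) (M.R6_log.add ((M.summable_mul_lipBound hq0 hq).mul_right M.r)) ?_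
  intro y ξ hξ
  rw [norm_mul, Real.norm_of_nonneg (hq0 y), Real.norm_eq_abs]
  have := mul_le_mul_of_nonneg_left (M.abs_log_f_le y hξ) (hq0 y)
  linarith

end Summability

/-- `K_q(ξ) - K_q(ξ*) = L(ξ*) - L(ξ)`, so this is (R3). -/
theorem expectedLogLik_lt (hq_pos : ∀ y, 0 < q y) (hq : Summable q)
    {ξ : EuclideanSpace ℝ (Fin d)} (hξ : ξ ∈ M.B) (hne : ξ ≠ M.xistar) :
    M.expectedLogLik ξ < M.expectedLogLik M.xistar := by
  have hq0 y : 0 ≤ q y := (hq_pos y).le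
  have hL := M.summable_mul_log_f hq0 hq hξ
  have hL₀ := M.summable_mul_log_f hq0 hq M.xistar_mem_B
  have hKL : (fun y => q y * log (q y / M.f y ξ)) = fun y =>
      q y * log (q y / M.f y M.xistar) + (q y * log (M.f y M.xistar) - q y * log (M.f y ξ)) := by
    funext y
    rw [log_div (hq_pos y).ne' (M.f_pos y ξ (M.ball_subset hξ)).ne',
      log_div (hq_pos y).ne' (M.f_pos y M.xistar M.xistar_mem).ne']
    ring
  have hsum := M.R3_summable.add (hL₀.sub hL)
  rcases M.R3_unique_min ξ (M.ball_subset hξ) hne with h | h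
  · exact absurd (hKL ▸ hsum) h
  · rw [hKL, M.R3_summable.tsum_add (hL₀.sub hL), hL₀.tsum_sub hL] at h
    unfold expectedLogLik
    linarith

theorem ae_eventually_forall_avgLogLik_lt {Ω : Type} [MeasurableSpace Ω] [MeasurableSpace Y]
    [Countable Y] [MeasurableSingletonClass Y] {P : Measure Ω} [IsProbabilityMeasure P]
    {yseq : ℕ → Ω → Y} (hiid : IIDData P yseq q) (hq : Summable q)
    {S : Set (EuclideanSpace ℝ (Fin d))} (hS : IsCompact S) (hSB : S ⊆ M.B) {b : ℝ}
    (hb : ∀ ζ ∈ S, M.expectedLogLik ζ < b) :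
    ∀ᵐ ω ∂P, ∀ᶠ n in atTop, ∀ ζ ∈ S, avgLogLik M.f n (fun i => yseq i ω) ζ < b := by
  have hq0 := hiid.nonneg
  obtain ⟨b', hb'b, hb'⟩ :=
    hS.exists_lt_forall_lt ((M.continuousOn_expectedLogLik hq0 hq).mono hSB) hb
  set C := ∑' y, q y * M.lipBound y + 1
  have hC : 0 < C := by
    have : 0 ≤ ∑' y, q y * M.lipBound y :=
      tsum_nonneg fun y => mul_nonneg (hq0 y) (M.lipBound_nonneg y)
    linarith
  obtain ⟨t, htS, ht, hcov⟩ := hS.finite_cover_balls (e := (b - b') / C) (by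
    have := sub_pos.2 hb'b; positivity)
  have hnet : ∀ᵐ ω ∂P, ∀ x ∈ t, Tendsto (fun n => avgLogLik M.f n (fun i => yseq i ω) x)
      atTop (𝓝 (M.expectedLogLik x)) :=
    (ae_ball_iff ht.countable).2 fun x hx =>
      hiid.ae_tendsto_average _ (M.summable_mul_abs_log_f hq0 hq (hSB (htS hx)))
  have hlip := hiid.ae_tendsto_average M.lipBound
    ((M.summable_mul_lipBound hq0 hq).congr fun y => by rw [abs_of_nonneg (M.lipBound_nonneg y)])
  filter_upwards [hnet, hlip] with ω hω hD
  refine eventually_forall_lt_of_finite_net ht hcov hC.le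
    (fun n z hz x hx => ?_) ((tendsto_order.1 hD).2 C (lt_add_one _) |>.mono fun _ => le_of_lt)
    hω fun x hx => ?_
  · exact M.abs_avgLogLik_sub_le n _ (hSB hz) (hSB (htS hx))
  · rw [mul_div_cancel₀ _ hC.ne']
    linarith [hb' x (htS hx)]

end RegularModel

/-- under the regularity setting, there exists a sequence of measurable
`Ξ`-valued estimators which, almost surely, for all sufficiently large `n`, globally
maximize the average log-likelihood over `Ξ`. -/
theorem exists_mle_sequence
    {Y Ω : Type} [Countable Y] [MeasurableSpace Y] [MeasurableSingletonClass Y]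
    [MeasurableSpace Ω] {d : ℕ} {q : Y → ℝ}
    (P : MeasureTheory.Measure Ω) [MeasureTheory.IsProbabilityMeasure P]
    (yseq : ℕ → Ω → Y)
    (hq_pos : ∀ y, 0 < q y) (hq_pmf : ∑' y, q y = 1)
    (hiid : IIDData P yseq q)
    (M : RegularModel Y q d) :
    ∃ est : (n : ℕ) → (Fin n → Y) → EuclideanSpace ℝ (Fin d),
      (∀ n, Measurable (est n)) ∧ (∀ n ys, est n ys ∈ M.Xi) ∧
        ∀ᵐ ω ∂P, ∃ N : ℕ, ∀ n ≥ N, ∀ ξ ∈ M.Xi,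
          avgLogLik M.f n (fun i => yseq i ω) ξ ≤
            avgLogLik M.f n (fun i => yseq i ω) (est n (fun i => yseq i ω)) := by
  have hq : Summable q := by
    by_contra h
    simp [tsum_eq_zero_of_not_summable h] at hq_pmf
  have hρ : 0 < M.r / 2 := half_pos M.r_pos
  have hKB : closedBall M.xistar (M.r / 2) ⊆ M.B := closedBall_subset_ball (half_lt_self M.r_pos)
  have hSB : sphere M.xistar (M.r / 2) ⊆ M.B := sphere_subset_closedBall.trans hKB
  choose est hest_mem hest_max using fun n (ys : Fin n → Y) =>
    (isCompact_closedBall M.xistar (M.r / 2)).exists_isMaxOn (nonempty_closedBall.2 hρ.le)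
      ((M.continuousOn_avgLogLik n ys).mono (hKB.trans M.ball_subset))
  refine ⟨est, fun n => .of_discrete, fun n ys => M.ball_subset (hKB (hest_mem n ys)), ?_⟩
  obtain ⟨c, hc, hsphere⟩ := (isCompact_sphere M.xistar (M.r / 2)).exists_lt_forall_lt
    ((M.continuousOn_expectedLogLik hiid.nonneg hq).mono hSB) fun ζ hζ =>
      M.expectedLogLik_lt hq_pos hq (hSB hζ) (ne_of_mem_sphere hζ hρ.ne')
  filter_upwards [M.ae_eventually_forall_avgLogLik_lt hiid hq (isCompact_sphere _ _) hSB hsphere,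
    hiid.ae_tendsto_average _ (M.summable_mul_abs_log_f hiid.nonneg hq M.xistar_mem_B)]
    with ω hS hcenter
  obtain ⟨N, hN⟩ := eventually_atTop.1 (hS.and (hcenter.eventually (lt_mem_nhds hc)))
  refine ⟨N, fun n hn => isMaxOn_iff.1 ?_⟩
  obtain ⟨hSn, hcn⟩ := hN n hn
  exact (hest_max n _).of_isPreconnected_superlevel (M.ball_subset (hKB (hest_mem n _)))
    (hest_mem n _) (hcn.trans_le (hest_max n _ (mem_closedBall_self hρ.le)))
    (fun z hz => (hSn z hz).le) (M.R8 n _ c)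
end

section
/- Let Ξ ⊆ ℝ be open, ξ₀ ∈ Ξ, p₁ be a strictly positive continuous proper prior density on Ξ, h a positive integer with 0 < K₁ := ∫_Ξ (ξ−ξ₀)^{2h} p₁(ξ)dξ < ∞, and f(y|ξ) a sampling probability mass function for discrete data y, continuous in ξ, with f(y|ξ₀) > 0 and 0 < ∫_Ξ f(y|ξ)p₁(ξ)dξ < ∞. Consider testing M₀: ξ = ξ₀ against M₁: ξ ≠ ξ₀ with equal prior model probabilities. Then the Bayes (posterior expected loss minimizing) decision under the {0,1}-loss (loss 1 for choosing the wrong model, 0 otherwise) with the moment prior p₁^M(ξ) = (ξ−ξ₀)^{2h}p₁(ξ)/K₁ under M₁ coincides with the Bayes decision under the local prior p₁ and the distance-weighted loss L(a,ξ) defined by L(1,ξ₀) = K₁, L(0,ξ) = (ξ−ξ₀)^{2h} for ξ ≠ ξ₀, and L(a,ξ) = 0 otherwise: in both problems M₁ is (weakly) preferred to M₀ exactly when ∫_Ξ (ξ−ξ₀)^{2h} f(y|ξ) p₁(ξ) dξ ≥ K₁ f(y|ξ₀). -/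
open MeasureTheory

/-- for testing a sharp null `M₀ : ξ = ξ₀` against `M₁ : ξ ≠ ξ₀` with equal
prior model probabilities, the Bayes decision under the `{0,1}`-loss with the moment
prior `p₁^M(ξ) = (ξ−ξ₀)^{2h}p₁(ξ)/K₁` coincides with the Bayes decision under the local
prior `p₁` and the distance-weighted loss: in both problems `M₁` is weakly preferred to
`M₀` exactly when `∫ (ξ−ξ₀)^{2h} f(y|ξ)p₁(ξ)dξ ≥ K₁ f(y|ξ₀)`. -/
theorem moment_prior_decision_coincides_with_weighted_loss
    {Yt : Type} (Xi : Set ℝ) (hXi_open : IsOpen Xi)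
    (ξ₀ : ℝ) (hξ₀ : ξ₀ ∈ Xi)
    (p1 : ℝ → ℝ) (hp1_pos : ∀ ξ ∈ Xi, 0 < p1 ξ) (hp1_cont : ContinuousOn p1 Xi)
    (hp1_int : IntegrableOn p1 Xi) (hp1_one : ∫ ξ in Xi, p1 ξ = 1)
    (h : ℕ) (hh : 1 ≤ h)
    (K₁ : ℝ) (hK₁ : K₁ = ∫ ξ in Xi, (ξ - ξ₀) ^ (2 * h) * p1 ξ) (hK₁_pos : 0 < K₁)
    (hK₁_fin : IntegrableOn (fun ξ => (ξ - ξ₀) ^ (2 * h) * p1 ξ) Xi)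
    (f : Yt → ℝ → ℝ) (y : Yt)
    (hf_cont : ContinuousOn (f y) Xi) (hf_nonneg : ∀ ξ ∈ Xi, 0 ≤ f y ξ)
    (hf₀_pos : 0 < f y ξ₀)
    (m1 : ℝ) (hm1 : m1 = ∫ ξ in Xi, f y ξ * p1 ξ) (hm1_pos : 0 < m1)
    (hm1_fin : IntegrableOn (fun ξ => f y ξ * p1 ξ) Xi)
    (mM : ℝ) (hmM : mM = ∫ ξ in Xi, f y ξ * ((ξ - ξ₀) ^ (2 * h) * p1 ξ / K₁))
    (J : ℝ) (hJ : J = ∫ ξ in Xi, (ξ - ξ₀) ^ (2 * h) * (f y ξ * p1 ξ)) :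
    -- Bayes decision under the {0,1}-loss and the moment prior:
    -- posterior probability of M₀ does not exceed that of M₁ iff K₁·f(y|ξ₀) ≤ J
    ((f y ξ₀ / (f y ξ₀ + mM) ≤ mM / (f y ξ₀ + mM)) ↔ K₁ * f y ξ₀ ≤ J) ∧
    -- Bayes decision under the distance-weighted loss and the local prior:
    -- posterior expected loss of choosing M₁ does not exceed that of choosing M₀
    -- iff K₁·f(y|ξ₀) ≤ J
    ((K₁ * (f y ξ₀ / (f y ξ₀ + m1)) ≤ J / (f y ξ₀ + m1)) ↔ K₁ * f y ξ₀ ≤ J) := by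
  have hmMJ : mM = J / K₁ := by
    rw [hmM, hJ, ← integral_div]
    congr 1
    ext ξ
    ring
  have hJ_nonneg : 0 ≤ J := by
    rw [hJ]
    apply setIntegral_nonneg hXi_open.measurableSet
    intro ξ hξ
    exact mul_nonneg (by rw [pow_mul]; positivity) (mul_nonneg (hf_nonneg ξ hξ) (hp1_pos ξ hξ).le)
  have hmM_nonneg : 0 ≤ mM := hmMJ ▸ div_nonneg hJ_nonneg hK₁_pos.le
  have hD : 0 < f y ξ₀ + mM := by positivity
  have hD2 : 0 < f y ξ₀ + m1 := by positivity
  constructor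
  · rw [div_le_div_iff_of_pos_right hD, hmMJ, le_div_iff₀ hK₁_pos, mul_comm]
  · rw [← mul_div_assoc, div_le_div_iff_of_pos_right hD2]
end
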